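/- arXiv:2108.11495 — 2 statements merged into one kernel-verified Lean document; each statement's English description precedes it below -/
import Mathlib

section
/- For every natural number n, the number of hyperbinary representations of n equals the (n+1)-st term of Stern's diatomic sequence; that is, h(n) = c(n+1). -/
/-- Stern's diatomic sequence: `c 0 = 0`, `c 1 = 1`, `c (2m) = c m`,
`c (2m+1) = c m + c (m+1)`. -/
def stern : ℕ → ℕ
  | 0 => 0
  | 1 => 1
  | n + 2 =>
    if h : n % 2 = 0 then stern (n / 2 + 1)
    else stern (n / 2 + 1) + stern (n / 2 + 2)
decreasing_by all_goals omega

/-- Number of hyperbinary representations of the natural number `m`. -/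
noncomputable def numHyper (m : ℕ) : ℕ :=
  Nat.card {d : ℕ →₀ ℕ // (∀ j, d j ≤ 2) ∧ m = d.sum fun j a => a * 2 ^ j}

/-!
The lowest digit `d 0` of a hyperbinary representation of `n` has the parity of `n`, and
deleting it leaves a representation of `(n - d 0) / 2`. Hence `h (2m+1) = h m` and
`h (2m+2) = h (m+1) + h m`, which are Stern's recurrences shifted by one.
-/

namespace Hyperbinary

section Shift

variable {M : Type*} [AddCommMonoid M]

noncomputable def tail (d : ℕ →₀ M) : ℕ →₀ M :=
  d.comapDomain Nat.succ Nat.succ_injective.injOn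

noncomputable def cons (a : M) (e : ℕ →₀ M) : ℕ →₀ M :=
  Finsupp.single 0 a + e.mapDomain Nat.succ

@[simp] lemma tail_apply (d : ℕ →₀ M) (j : ℕ) : tail d j = d (j + 1) := rfl

@[simp] lemma cons_zero (a : M) (e : ℕ →₀ M) : cons a e 0 = a := by
  simp [cons, Finsupp.mapDomain_of_notMem_range (f := Nat.succ) e 0 (by simp)]

@[simp] lemma cons_succ (a : M) (e : ℕ →₀ M) (j : ℕ) : cons a e (j + 1) = e j := by
  simp [cons, Finsupp.mapDomain_apply Nat.succ_injective]

@[simp] lemma tail_cons (a : M) (e : ℕ →₀ M) : tail (cons a e) = e := by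
  ext j; simp

lemma cons_head_tail (d : ℕ →₀ M) : cons (d 0) (tail d) = d := by
  ext j; cases j <;> simp

end Shift

def value (d : ℕ →₀ ℕ) : ℕ := d.sum fun j a => a * 2 ^ j

lemma value_cons (a : ℕ) (e : ℕ →₀ ℕ) : value (cons a e) = a + 2 * value e := by
  rw [value, cons, Finsupp.sum_add_index' (by simp) (fun _ _ _ => add_mul _ _ _),
    Finsupp.sum_single_index (zero_mul _),
    Finsupp.sum_mapDomain_index (fun _ => zero_mul _) (fun _ _ _ => add_mul _ _ _), value,
    Finsupp.mul_sum]
  simp only [pow_succ, pow_zero, mul_one]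
  congr 1
  exact Finsupp.sum_congr fun j _ => by ring

lemma value_eq_head_add (d : ℕ →₀ ℕ) : value d = d 0 + 2 * value (tail d) := by
  conv_lhs => rw [← cons_head_tail d]
  exact value_cons _ _

lemma two_pow_le_value {d : ℕ →₀ ℕ} {j : ℕ} (hj : d j ≠ 0) : 2 ^ j ≤ value d :=
  calc 2 ^ j ≤ d j * 2 ^ j := Nat.le_mul_of_pos_left _ (Nat.pos_of_ne_zero hj)
    _ ≤ value d := Finset.single_le_sum (f := fun i => d i * 2 ^ i) (fun _ _ => Nat.zero_le _)
      (Finsupp.mem_support_iff.mpr hj)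

lemma eq_zero_of_value_eq_zero {d : ℕ →₀ ℕ} (h : value d = 0) : d = 0 :=
  Finsupp.ext fun j => by_contra fun hj => (two_pow_le_value hj).not_gt (h ▸ Nat.two_pow_pos j)

abbrev Rep (m : ℕ) : Type := {d : ℕ →₀ ℕ // (∀ j, d j ≤ 2) ∧ m = value d}

instance (m : ℕ) : Finite (Rep m) := by
  have hsub : {d : ℕ →₀ ℕ | (∀ j, d j ≤ 2) ∧ m = value d} ⊆
      (Finset.range (m + 1)).finsupp fun _ => Finset.range 3 := by
    rintro d ⟨hd, rfl⟩
    refine Finset.mem_finsupp_iff.mpr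
      ⟨fun j hj => ?_, fun j _ => Finset.mem_range.mpr (Nat.lt_succ_of_le (hd j))⟩
    have := two_pow_le_value (Finsupp.mem_support_iff.mp hj)
    have := j.lt_two_pow_self
    simp only [Finset.mem_range]
    omega
  exact ((Finset.finite_toSet _).subset hsub).to_subtype

lemma eq_head_add {n : ℕ} (d : Rep n) : n = d.1 0 + 2 * value (tail d.1) :=
  d.2.2.trans (value_eq_head_add d.1)

noncomputable def headFiberEquiv {n a m : ℕ} (ha : a ≤ 2) (hn : n = a + 2 * m) :
    {d : Rep n // d.1 0 = a} ≃ Rep m where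
  toFun d := ⟨tail d.1.1, fun j => d.1.2.1 (j + 1), by
    have := eq_head_add d.1; have := d.2; omega⟩
  invFun e := ⟨⟨cons a e.1, fun j => by cases j <;> simp [ha, e.2.1], by
    rw [value_cons, ← e.2.2, hn]⟩, cons_zero _ _⟩
  left_inv d := Subtype.ext <| Subtype.ext <| d.2 ▸ cons_head_tail d.1.1
  right_inv e := Subtype.ext <| tail_cons _ _

end Hyperbinary

open Hyperbinary

lemma numHyper_eq_card (m : ℕ) : numHyper m = Nat.card (Rep m) := rfl

theorem numHyper_zero : numHyper 0 = 1 := by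
  rw [numHyper_eq_card]
  exact Nat.card_eq_one_iff_exists.mpr
    ⟨⟨0, fun _ => zero_le_two, Finsupp.sum_zero_index.symm⟩,
      fun d => Subtype.ext (eq_zero_of_value_eq_zero d.2.2.symm)⟩

theorem numHyper_two_mul_add_one (m : ℕ) : numHyper (2 * m + 1) = numHyper m := by
  have head_eq_one (d : Rep (2 * m + 1)) : d.1 0 = 1 := by
    have := eq_head_add d; have := d.2.1 0; omega
  rw [numHyper_eq_card, numHyper_eq_card]
  exact Nat.card_congr <| (Equiv.subtypeUnivEquiv head_eq_one).symm.trans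
    (headFiberEquiv one_le_two (by ring))

theorem numHyper_two_mul_add_two (m : ℕ) :
    numHyper (2 * m + 2) = numHyper (m + 1) + numHyper m := by
  have head_ne_zero_iff (d : Rep (2 * m + 2)) : d.1 0 ≠ 0 ↔ d.1 0 = 2 := by
    have := eq_head_add d; have := d.2.1 0; omega
  rw [numHyper_eq_card, numHyper_eq_card, numHyper_eq_card]
  calc Nat.card (Rep (2 * m + 2))
      = Nat.card ({d : Rep (2 * m + 2) // d.1 0 = 0} ⊕ {d : Rep (2 * m + 2) // d.1 0 ≠ 0}) :=
        Nat.card_congr (Equiv.sumCompl _).symm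
    _ = Nat.card {d : Rep (2 * m + 2) // d.1 0 = 0} +
          Nat.card {d : Rep (2 * m + 2) // d.1 0 = 2} := by
        rw [Nat.card_sum, Nat.card_congr (Equiv.subtypeEquivRight head_ne_zero_iff)]
    _ = Nat.card (Rep (m + 1)) + Nat.card (Rep m) := by
        rw [Nat.card_congr (headFiberEquiv (m := m + 1) zero_le_two (by ring)),
          Nat.card_congr (headFiberEquiv (m := m) le_rfl (by ring))]

theorem stern_two_mul (m : ℕ) : stern (2 * m) = stern m := by
  cases m with
  | zero => rfl
  | succ m =>
    rw [show 2 * (m + 1) = 2 * m + 2 by ring, stern, dif_pos (by omega)]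
    congr 1; omega

theorem stern_two_mul_add_one (m : ℕ) : stern (2 * m + 1) = stern m + stern (m + 1) := by
  cases m with
  | zero => simp [stern]
  | succ m =>
    rw [show 2 * (m + 1) + 1 = 2 * m + 1 + 2 by ring, stern, dif_neg (by omega)]
    congr 2 <;> omega

theorem hyper_eq_stern (n : ℕ) : numHyper n = stern (n + 1) := by
  induction n using Nat.strong_induction_on with
  | _ n ih =>
    obtain ⟨k, rfl | rfl⟩ := Nat.even_or_odd' n
    · cases k with
      | zero => simp [numHyper_zero, stern]
      | succ m =>
        rw [show 2 * (m + 1) = 2 * m + 2 by ring, numHyper_two_mul_add_two,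
          ih (m + 1) (by omega), ih m (by omega), show 2 * m + 2 + 1 = 2 * (m + 1) + 1 by ring,
          stern_two_mul_add_one, add_comm]
    · rw [numHyper_two_mul_add_one, ih k (by omega), show 2 * k + 1 + 1 = 2 * (k + 1) by ring,
        stern_two_mul]
end

section
/- Let n = 2^j · m with m an odd nonnegative integer, and let j < i. Then f(n,i) = f(n - 2^j, i) + f(n + 2^j, i). -/
/-- Number of `i`-bit binary signed-digit representations of the integer `n`. -/
noncomputable def numBSD (n : ℤ) (i : ℕ) : ℕ :=
  Nat.card {b : Fin i → ℤ //
    (∀ j, b j = -1 ∨ b j = 0 ∨ b j = 1) ∧ n = ∑ j, b j * 2 ^ (j : ℕ)}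

lemma bsd_finite (n : ℤ) (i : ℕ) :
    Finite {b : Fin i → ℤ //
      (∀ j, b j = -1 ∨ b j = 0 ∨ b j = 1) ∧ n = ∑ j, b j * 2 ^ (j : ℕ)} := by
  have hfin : ({-1, 0, 1} : Set ℤ).Finite :=
    ((Set.finite_singleton 1).insert 0).insert (-1)
  haveI := hfin.to_subtype
  apply Finite.of_injective
    (fun x => (fun j => (⟨x.1 j, by rcases x.2.1 j with h | h | h <;> simp [h]⟩ :
      ({-1, 0, 1} : Set ℤ)) : Fin i → ({-1, 0, 1} : Set ℤ)))
  intro x y h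
  apply Subtype.ext
  funext j
  exact congrArg Subtype.val (congrFun h j)

lemma sum_split (i : ℕ) (f : Fin (i + 1) → ℤ) :
    ∑ j, f j * 2 ^ (j : ℕ) = f 0 + 2 * ∑ j : Fin i, f j.succ * 2 ^ (j : ℕ) := by
  rw [Fin.sum_univ_succ, Finset.mul_sum]
  congr 1
  · simp
  · refine Finset.sum_congr rfl fun j _ => ?_
    have hv : ((j.succ : Fin (i + 1)) : ℕ) = (j : ℕ) + 1 := rfl
    rw [hv, pow_succ]
    ring

lemma numBSD_even (a : ℤ) (i : ℕ) : numBSD (2 * a) (i + 1) = numBSD a i := by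
  unfold numBSD
  apply Nat.card_congr
  have key : ∀ b : Fin (i + 1) → ℤ, (∀ j, b j = -1 ∨ b j = 0 ∨ b j = 1) →
      2 * a = ∑ j, b j * 2 ^ (j : ℕ) →
      b 0 = 0 ∧ a = ∑ j : Fin i, b j.succ * 2 ^ (j : ℕ) := by
    intro b hd hs
    have h2 := hs.trans (sum_split i b)
    have h0 := hd 0
    constructor <;> omega
  exact
    { toFun := fun x => ⟨fun j => x.1 j.succ, fun j => x.2.1 j.succ,
        (key x.1 x.2.1 x.2.2).2⟩
      invFun := fun y => ⟨Fin.cons 0 y.1, by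
        intro j
        refine Fin.cases ?_ ?_ j
        · simp
        · intro k; simpa using y.2.1 k, by
        rw [sum_split]
        simp only [Fin.cons_zero, Fin.cons_succ]
        linarith [y.2.2]⟩
      left_inv := fun x => by
        apply Subtype.ext
        funext j
        refine Fin.cases ?_ ?_ j
        · simpa using ((key x.1 x.2.1 x.2.2).1).symm
        · intro k; simp
      right_inv := fun y => by
        apply Subtype.ext
        funext j
        simp }

lemma update_sum (n : ℤ) (i : ℕ) (b : Fin (i + 1) → ℤ) (d : ℤ)
    (hs : n = ∑ j, b j * 2 ^ (j : ℕ)) :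
    n - b 0 + d = ∑ j, (Function.update b 0 d) j * 2 ^ (j : ℕ) := by
  rw [sum_split, Function.update_self]
  have h1 : ∀ j : Fin i, (Function.update b 0 d) j.succ = b j.succ := fun j =>
    Function.update_of_ne (Fin.succ_ne_zero j) _ _
  simp only [h1]
  have h2 := hs.trans (sum_split i b)
  linarith

lemma update_digits (i : ℕ) (b : Fin (i + 1) → ℤ) (d : ℤ)
    (hd : ∀ j, b j = -1 ∨ b j = 0 ∨ b j = 1) (hdd : d = -1 ∨ d = 0 ∨ d = 1) :
    ∀ j, (Function.update b 0 d) j = -1 ∨ (Function.update b 0 d) j = 0 ∨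
      (Function.update b 0 d) j = 1 := by
  intro j
  by_cases h : j = 0
  · subst h; simpa using hdd
  · rw [Function.update_of_ne h]; exact hd j

lemma update_self_of_eq {α β : Type*} [DecidableEq α] (f : α → β) (a : α) (v : β)
    (h : f a = v) : Function.update f a v = f := by
  subst h; exact Function.update_eq_self a f

lemma numBSD_odd (m : ℤ) (hmo : Odd m) (i : ℕ) :
    numBSD m (i + 1) = numBSD (m - 1) (i + 1) + numBSD (m + 1) (i + 1) := by
  haveI := bsd_finite (m - 1) (i + 1)
  haveI := bsd_finite (m + 1) (i + 1)
  unfold numBSD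
  rw [← Nat.card_sum]
  apply Nat.card_congr
  have key : ∀ b : Fin (i + 1) → ℤ, (∀ j, b j = -1 ∨ b j = 0 ∨ b j = 1) →
      m = ∑ j, b j * 2 ^ (j : ℕ) → b 0 = 1 ∨ b 0 = -1 := by
    intro b hd hs
    obtain ⟨k, hk⟩ := hmo
    have h2 := hs.trans (sum_split i b)
    have h0 := hd 0
    omega
  have key0 : ∀ n : ℤ, Even n → ∀ b : Fin (i + 1) → ℤ,
      (∀ j, b j = -1 ∨ b j = 0 ∨ b j = 1) →
      n = ∑ j, b j * 2 ^ (j : ℕ) → b 0 = 0 := by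
    intro n hn b hd hs
    obtain ⟨t, ht⟩ := hn
    have h2 := hs.trans (sum_split i b)
    have h0 := hd 0
    omega
  have he1 : Even (m - 1) := by obtain ⟨k, hk⟩ := hmo; exact ⟨k, by omega⟩
  have he2 : Even (m + 1) := by obtain ⟨k, hk⟩ := hmo; exact ⟨k + 1, by omega⟩
  refine
    { toFun := fun x =>
        if h : x.1 0 = 1 then
          Sum.inl ⟨Function.update x.1 0 0,
            update_digits i x.1 0 x.2.1 (Or.inr (Or.inl rfl)), by
              have := update_sum m i x.1 0 x.2.2
              rw [h] at this
              simpa using this⟩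
        else
          Sum.inr ⟨Function.update x.1 0 0,
            update_digits i x.1 0 x.2.1 (Or.inr (Or.inl rfl)), by
              have hb := (key x.1 x.2.1 x.2.2).resolve_left h
              have := update_sum m i x.1 0 x.2.2
              rw [hb] at this
              simpa using this⟩
      invFun := fun y =>
        match y with
        | Sum.inl c => ⟨Function.update c.1 0 1,
            update_digits i c.1 1 c.2.1 (Or.inr (Or.inr rfl)), by
              have h0 : c.1 0 = 0 := key0 (m - 1) he1 c.1 c.2.1 c.2.2
              have := update_sum (m - 1) i c.1 1 c.2.2
              rw [h0] at this
              simpa using this⟩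
        | Sum.inr c => ⟨Function.update c.1 0 (-1),
            update_digits i c.1 (-1) c.2.1 (Or.inl rfl), by
              have h0 : c.1 0 = 0 := key0 (m + 1) he2 c.1 c.2.1 c.2.2
              have := update_sum (m + 1) i c.1 (-1) c.2.2
              rw [h0] at this
              linarith [this]⟩
      left_inv := fun x => ?_
      right_inv := fun y => ?_ }
  · dsimp only
    by_cases h : x.1 0 = 1
    · rw [dif_pos h]
      apply Subtype.ext
      show Function.update (Function.update x.1 0 0) 0 1 = x.1
      rw [Function.update_idem]
      exact update_self_of_eq _ _ _ h
    · rw [dif_neg h]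
      have hb := (key x.1 x.2.1 x.2.2).resolve_left h
      apply Subtype.ext
      show Function.update (Function.update x.1 0 0) 0 (-1) = x.1
      rw [Function.update_idem]
      exact update_self_of_eq _ _ _ hb
  · match y with
    | Sum.inl c =>
      have h0 : c.1 0 = 0 := key0 (m - 1) he1 c.1 c.2.1 c.2.2
      have hcond : (Function.update c.1 0 1) 0 = 1 := Function.update_self _ _ _
      simp only [dif_pos hcond]
      congr 1
      apply Subtype.ext
      show Function.update (Function.update c.1 0 1) 0 0 = c.1
      rw [Function.update_idem]
      exact update_self_of_eq _ _ _ h0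
    | Sum.inr c =>
      have h0 : c.1 0 = 0 := key0 (m + 1) he2 c.1 c.2.1 c.2.2
      have hcond : ¬ (Function.update c.1 0 (-1)) 0 = 1 := by
        rw [Function.update_self]; norm_num
      simp only [dif_neg hcond]
      congr 1
      apply Subtype.ext
      show Function.update (Function.update c.1 0 (-1)) 0 0 = c.1
      rw [Function.update_idem]
      exact update_self_of_eq _ _ _ h0

theorem bsd_sum_neighbors (m : ℤ) (hm : 0 ≤ m) (hmo : Odd m) (j i : ℕ) (hji : j < i) :
    numBSD (2 ^ j * m) i =
      numBSD (2 ^ j * m - 2 ^ j) i + numBSD (2 ^ j * m + 2 ^ j) i := by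
  induction j generalizing i with
  | zero =>
    obtain ⟨i', rfl⟩ : ∃ i', i = i' + 1 := ⟨i - 1, by omega⟩
    simpa using numBSD_odd m hmo i'
  | succ j ih =>
    obtain ⟨i', rfl⟩ : ∃ i', i = i' + 1 := ⟨i - 1, by omega⟩
    rw [show (2 : ℤ) ^ (j + 1) * m - 2 ^ (j + 1) = 2 * (2 ^ j * m - 2 ^ j) by ring,
      show (2 : ℤ) ^ (j + 1) * m + 2 ^ (j + 1) = 2 * (2 ^ j * m + 2 ^ j) by ring,
      show (2 : ℤ) ^ (j + 1) * m = 2 * (2 ^ j * m) by ring,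
      numBSD_even, numBSD_even, numBSD_even]
    exact ih i' (by omega)
end
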